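/- Let F ∈ C²(T⁶) and let φ ∈ C⁴(T⁶) be a solution of equation (†) with Δφ + 2 > 0 everywhere. Set μ = 1/(max(Δφ+2) · (1 + ‖∇φ‖_{C⁰})) and let p₀ be a point where (Δφ+2)e^{−μφ} attains its maximum. Assume that at p₀, for every ξ ∈ ℝ⁶, both of the following hold: (i) B(ξ₁²+ξ₂²+ξ₃²+ξ₄²)+A(ξ₅²+ξ₆²) −2a₁(ξ₃ξ₅−ξ₂ξ₆)−2a₂(ξ₄ξ₅−ξ₁ξ₆)−2a₃(ξ₄ξ₆+ξ₁ξ₅)−2a₄(ξ₃ξ₆+ξ₂ξ₅) ≥ 0, and (ii) B(ξ₁²+ξ₂²+ξ₃²+ξ₄²)+A(ξ₅²+ξ₆²) ≥ 2|a₁|(ξ₃ξ₅+ξ₂ξ₆)+2|a₂|(ξ₄ξ₅+ξ₁ξ₆)+2|a₃|(ξ₄ξ₆+ξ₁ξ₅)+2|a₄|(ξ₃ξ₆+ξ₂ξ₅). Then μ(Δφ(p₀)+2)² ≤ −Δ(e^F)(p₀) + 2μ(Δφ(p₀)+2)e^{F(p₀)} + 3μ²(Δφ(p₀)+2)²|∇φ(p₀)|².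 -/

import Mathlib

open MeasureTheory

/-- Partial derivative in the `i`-th coordinate direction. -/
noncomputable def pd {n : ℕ} (i : Fin n) (f : (Fin n → ℝ) → ℝ) : (Fin n → ℝ) → ℝ :=
  fun x => fderiv ℝ f x (Pi.single i 1)

/-- Second partial derivative `∂²f/∂x^i∂x^j`. -/
noncomputable def pd2 {n : ℕ} (i j : Fin n) (f : (Fin n → ℝ) → ℝ) : (Fin n → ℝ) → ℝ :=
  pd i (pd j f)

/-- A function on `ℝⁿ` that is `1`-periodic in every coordinate, i.e. a function on `Tⁿ`. -/
def PeriodicPi {n : ℕ} (f : (Fin n → ℝ) → ℝ) : Prop :=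
  ∀ x : Fin n → ℝ, ∀ i : Fin n, f (x + Pi.single i 1) = f x

/-- The Euclidean Laplacian. -/
noncomputable def lap {n : ℕ} (f : (Fin n → ℝ) → ℝ) : (Fin n → ℝ) → ℝ :=
  fun x => ∑ i, pd2 i i f x

/-- `A = φ₁₁ + φ₂₂ + φ₃₃ + φ₄₄ + 1` on `T⁶`. -/
noncomputable def A6 (φ : (Fin 6 → ℝ) → ℝ) : (Fin 6 → ℝ) → ℝ :=
  fun x => pd2 0 0 φ x + pd2 1 1 φ x + pd2 2 2 φ x + pd2 3 3 φ x + 1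

/-- `B = φ₅₅ + φ₆₆ + 1` on `T⁶`. -/
noncomputable def B6 (φ : (Fin 6 → ℝ) → ℝ) : (Fin 6 → ℝ) → ℝ :=
  fun x => pd2 4 4 φ x + pd2 5 5 φ x + 1

/-- `a₁ = φ₃₅ − φ₂₆`. -/
noncomputable def a₁6 (φ : (Fin 6 → ℝ) → ℝ) : (Fin 6 → ℝ) → ℝ :=
  fun x => pd2 2 4 φ x - pd2 1 5 φ x

/-- `a₂ = φ₄₅ − φ₁₆`. -/
noncomputable def a₂6 (φ : (Fin 6 → ℝ) → ℝ) : (Fin 6 → ℝ) → ℝ :=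
  fun x => pd2 3 4 φ x - pd2 0 5 φ x

/-- `a₃ = φ₄₆ + φ₁₅`. -/
noncomputable def a₃6 (φ : (Fin 6 → ℝ) → ℝ) : (Fin 6 → ℝ) → ℝ :=
  fun x => pd2 3 5 φ x + pd2 0 4 φ x

/-- `a₄ = φ₃₆ + φ₂₅`. -/
noncomputable def a₄6 (φ : (Fin 6 → ℝ) → ℝ) : (Fin 6 → ℝ) → ℝ :=
  fun x => pd2 2 5 φ x + pd2 1 4 φ x

/-- Equation (†): the reduction of the quaternionic Monge–Ampère equation on `M₂` to the
base `T⁶` for `T²`-invariant data. -/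
def EqDagger (F φ : (Fin 6 → ℝ) → ℝ) : Prop :=
  ∀ x : Fin 6 → ℝ,
    A6 φ x * B6 φ x - (a₁6 φ x) ^ 2 - (a₂6 φ x) ^ 2 - (a₃6 φ x) ^ 2 - (a₄6 φ x) ^ 2
      = Real.exp (F x)

/-- The Euclidean norm of a vector in `ℝⁿ`. -/
noncomputable def eucNorm {n : ℕ} (v : Fin n → ℝ) : ℝ :=
  Real.sqrt (∑ i, (v i) ^ 2)

/-!
At a maximum point `p₀` of `u e^{-μφ}`, `u = Δφ + 2`, the gradient vanishes, giving `∇u = μu∇φ`,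
and the Hessian is nonpositive, giving `Hess u − μ²u ∇φ⊗∇φ − μu Hess φ ≤ 0`. Hypothesis (i) says
that the linearisation `L` of (†), a linear form on matrices, is nonnegative on
`ξ⊗ξ`, hence on every positive semidefinite matrix, so
`L(Hess u) ≤ μ²u L(∇φ⊗∇φ) + μu L(Hess φ)`. Since (†) is quadratic, `L(Hess φ) = 2e^F − u`, and
applying `Δ` to (†) gives `Δe^F = L(Hess Δφ) + 2∇A·∇B − 2Σ|∇aᵢ|²`. Finally `∇A + ∇B = ∇u = μu∇φ`
bounds `∇A·∇B` by `μ²u²|∇φ|²/4`, and (ii) bounds `L(∇φ⊗∇φ)` by `2u|∇φ|²`.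
-/

open Finset Matrix

section Calculus

variable {n : ℕ} {f g : (Fin n → ℝ) → ℝ}

lemma contDiff_pd {k m : WithTop ℕ∞} (hf : ContDiff ℝ k f) (hmk : m + 1 ≤ k) (i : Fin n) :
    ContDiff ℝ m (pd i f) :=
  (ContinuousLinearMap.apply ℝ ℝ (Pi.single i 1 : Fin n → ℝ)).contDiff.comp
    (hf.fderiv_right hmk)

lemma contDiff_pd2 {k m : WithTop ℕ∞} (hf : ContDiff ℝ k f) (hmk : m + 2 ≤ k) (i j : Fin n) :
    ContDiff ℝ m (pd2 i j f) :=
  contDiff_pd (contDiff_pd (m := m + 1) hf (by rwa [add_assoc, one_add_one_eq_two]) j) le_rfl i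

lemma differentiable_pd (hf : ContDiff ℝ 2 f) (i : Fin n) : Differentiable ℝ (pd i f) :=
  (contDiff_pd (m := 1) hf (by norm_num) i).differentiable one_ne_zero

lemma pd_add (hf : Differentiable ℝ f) (hg : Differentiable ℝ g) (i : Fin n) :
    pd i (fun x => f x + g x) = fun x => pd i f x + pd i g x := by
  ext x; simp [pd, fderiv_fun_add (hf x) (hg x)]

lemma pd_sub (hf : Differentiable ℝ f) (hg : Differentiable ℝ g) (i : Fin n) :
    pd i (fun x => f x - g x) = fun x => pd i f x - pd i g x := by
  ext x; simp [pd, fderiv_fun_sub (hf x) (hg x)]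

lemma pd_add_const (c : ℝ) (i : Fin n) : pd i (fun x => f x + c) = pd i f := by
  ext x; simp [pd, fderiv_add_const]

lemma pd_mul (hf : Differentiable ℝ f) (hg : Differentiable ℝ g) (i : Fin n) :
    pd i (fun x => f x * g x) = fun x => f x * pd i g x + g x * pd i f x := by
  ext x; simp [pd, fderiv_fun_mul (hf x) (hg x)]

lemma pd_const_mul (c : ℝ) (hf : Differentiable ℝ f) (i : Fin n) :
    pd i (fun x => c * f x) = fun x => c * pd i f x := by
  ext x; simp [pd, fderiv_const_mul (hf x)]

lemma pd_sum {ι : Type*} (s : Finset ι) {F : ι → (Fin n → ℝ) → ℝ}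
    (hF : ∀ k ∈ s, Differentiable ℝ (F k)) (i : Fin n) :
    pd i (fun x => ∑ k ∈ s, F k x) = fun x => ∑ k ∈ s, pd i (F k) x := by
  ext x; simp [pd, fderiv_fun_sum fun k hk => hF k hk x]

lemma pd_exp_const_mul (c : ℝ) (hf : Differentiable ℝ f) (i : Fin n) :
    pd i (fun x => Real.exp (c * f x)) = fun x => c * Real.exp (c * f x) * pd i f x := by
  ext x
  simp only [pd, ((hf x).hasFDerivAt.const_mul c).exp.fderiv, _root_.smul_apply, smul_eq_mul]
  ring

lemma pd_pd_eq_fderiv_fderiv (hf : ContDiff ℝ 2 f) (i j : Fin n) (x : Fin n → ℝ) :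
    pd i (pd j f) x = fderiv ℝ (fderiv ℝ f) x (Pi.single i 1) (Pi.single j 1) := by
  have hd : DifferentiableAt ℝ (fderiv ℝ f) x :=
    (hf.fderiv_right (m := 1) (by norm_num)).differentiable one_ne_zero x
  change fderiv ℝ (fun y => fderiv ℝ f y (Pi.single j 1)) x (Pi.single i 1) = _
  rw [fderiv_clm_apply hd (differentiableAt_const _)]
  simp

lemma pd_comm (hf : ContDiff ℝ 2 f) (i j : Fin n) : pd i (pd j f) = pd j (pd i f) := by
  ext x
  rw [pd_pd_eq_fderiv_fderiv hf, pd_pd_eq_fderiv_fderiv hf,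
    (hf.contDiffAt.isSymmSndFDerivAt (by simp)).eq]

end Calculus

section Laplacian

variable {n : ℕ} {f g : (Fin n → ℝ) → ℝ}

lemma pd2_mul (hf : ContDiff ℝ 2 f) (hg : ContDiff ℝ 2 g) (i j : Fin n) (x : Fin n → ℝ) :
    pd2 i j (fun x => f x * g x) x
      = f x * pd2 i j g x + pd i f x * pd j g x + pd j f x * pd i g x + g x * pd2 i j f x := by
  have hf' := hf.differentiable two_ne_zero
  have hg' := hg.differentiable two_ne_zero
  rw [pd2, pd_mul hf' hg', pd_add (hf'.fun_mul (differentiable_pd hg j))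
    (hg'.fun_mul (differentiable_pd hf j)), pd_mul hf' (differentiable_pd hg j),
    pd_mul hg' (differentiable_pd hf j)]
  simp only [pd2]
  ring

lemma lap_mul (hf : ContDiff ℝ 2 f) (hg : ContDiff ℝ 2 g) (x : Fin n → ℝ) :
    lap (fun x => f x * g x) x
      = f x * lap g x + 2 * ∑ i, pd i f x * pd i g x + g x * lap f x := by
  simp only [lap, pd2_mul hf hg, sum_add_distrib, ← mul_sum]
  ring

lemma lap_pow_two (hf : ContDiff ℝ 2 f) (x : Fin n → ℝ) :
    lap (fun x => f x ^ 2) x = 2 * f x * lap f x + 2 * ∑ i, pd i f x ^ 2 := by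
  simp only [sq, lap_mul hf hf]
  ring

lemma lap_add (hf : ContDiff ℝ 2 f) (hg : ContDiff ℝ 2 g) :
    lap (fun x => f x + g x) = fun x => lap f x + lap g x := by
  ext x
  simp only [lap, pd2, pd_add (hf.differentiable two_ne_zero) (hg.differentiable two_ne_zero),
    pd_add (differentiable_pd hf _) (differentiable_pd hg _), sum_add_distrib]

lemma lap_sub (hf : ContDiff ℝ 2 f) (hg : ContDiff ℝ 2 g) :
    lap (fun x => f x - g x) = fun x => lap f x - lap g x := by
  ext x
  simp only [lap, pd2, pd_sub (hf.differentiable two_ne_zero) (hg.differentiable two_ne_zero),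
    pd_sub (differentiable_pd hf _) (differentiable_pd hg _), sum_sub_distrib]

lemma lap_add_const (c : ℝ) : lap (fun x => f x + c) = lap f := by
  ext x
  simp only [lap, pd2, pd_add_const]

lemma contDiff_lap {k m : WithTop ℕ∞} (hf : ContDiff ℝ k f) (hmk : m + 2 ≤ k) :
    ContDiff ℝ m (lap f) :=
  ContDiff.sum fun i _ => contDiff_pd2 hf hmk i i

lemma pd_pd_pd_pd_comm (hf : ContDiff ℝ 4 f) (i j k l : Fin n) :
    pd i (pd j (pd k (pd l f))) = pd k (pd l (pd i (pd j f))) := by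
  have h2 : ContDiff ℝ 2 f := hf.of_le (by norm_num)
  have h3 : ∀ a, ContDiff ℝ 2 (pd a f) := fun a => contDiff_pd hf (by norm_num) a
  have h4 : ∀ a b, ContDiff ℝ 2 (pd a (pd b f)) := fun a b => contDiff_pd2 hf (by norm_num) a b
  rw [pd_comm (h3 l) j k, pd_comm (h4 j l) i k, pd_comm (h3 l) i j, pd_comm h2 i l,
    pd_comm (h3 i) j l, pd_comm h2 j i]

lemma lap_pd2 (hf : ContDiff ℝ 4 f) (i j : Fin n) : lap (pd2 i j f) = pd2 i j (lap f) := by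
  have hd : ∀ k, Differentiable ℝ (pd k (pd k f)) := fun k =>
    (contDiff_pd2 (m := 1) hf (by norm_num) k k).differentiable one_ne_zero
  have hd' : ∀ k, Differentiable ℝ (pd j (pd k (pd k f))) := fun k =>
    differentiable_pd (contDiff_pd2 hf (by norm_num) k k) j
  ext x
  unfold lap pd2
  rw [pd_sum _ (fun k _ => hd k), pd_sum _ (fun k _ => hd' k)]
  exact sum_congr rfl fun k _ => congrFun (pd_pd_pd_pd_comm hf k k i j) x

end Laplacian

section Hessian

variable {n : ℕ} {f : (Fin n → ℝ) → ℝ}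

noncomputable def hessian (f : (Fin n → ℝ) → ℝ) (x : Fin n → ℝ) : Matrix (Fin n) (Fin n) ℝ :=
  Matrix.of fun i j => pd2 i j f x

lemma hessian_add_const (c : ℝ) : hessian (fun x => f x + c) = hessian f := by
  ext x i j
  simp only [hessian, of_apply, pd2, pd_add_const]

lemma isHermitian_hessian (hf : ContDiff ℝ 2 f) (x : Fin n → ℝ) : (hessian f x).IsHermitian := by
  ext i j
  simp [hessian, pd2, pd_comm hf i j]

lemma dotProduct_hessian_mulVec (hf : ContDiff ℝ 2 f) (x v : Fin n → ℝ) :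
    v ⬝ᵥ (hessian f x *ᵥ v) = fderiv ℝ (fderiv ℝ f) x v v := by
  conv_rhs => rw [pi_eq_sum_univ' v]
  simp only [map_sum, map_smul, _root_.sum_apply, _root_.smul_apply, smul_eq_mul, dotProduct,
    mulVec, hessian, of_apply, pd2, pd_pd_eq_fderiv_fderiv hf, mul_sum]
  rw [sum_comm]
  refine sum_congr rfl fun i _ => sum_congr rfl fun j _ => ?_
  ring

lemma deriv_deriv_nonpos_of_isLocalMax {g : ℝ → ℝ} {t₀ : ℝ} (h : IsLocalMax g t₀)
    (hc : ContinuousAt g t₀) : deriv (deriv g) t₀ ≤ 0 := by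
  by_contra! hpos
  -- otherwise `t₀` is also a local minimum, so `g` is locally constant
  have hconst : g =ᶠ[nhds t₀] fun _ => g t₀ :=
    ((isLocalMin_of_deriv_deriv_pos hpos h.deriv_eq_zero hc).and h).mono
      fun _ ht => le_antisymm ht.2 ht.1
  have hderiv : deriv g =ᶠ[nhds t₀] fun _ => 0 := by
    filter_upwards [hconst.eventuallyEq_nhds] with t ht
    rw [ht.deriv_eq, deriv_const]
  rw [hderiv.deriv_eq, deriv_const] at hpos
  exact hpos.false

lemma fderiv_fderiv_apply_self_nonpos_of_isLocalMax (hf : ContDiff ℝ 2 f) {x₀ : Fin n → ℝ}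
    (h : IsLocalMax f x₀) (v : Fin n → ℝ) : fderiv ℝ (fderiv ℝ f) x₀ v v ≤ 0 := by
  have hline : ∀ t : ℝ, HasDerivAt (fun s : ℝ => x₀ + s • v) v t := fun t => by
    simpa using ((hasDerivAt_id t).smul_const v).const_add x₀
  have hderiv : deriv (fun t : ℝ => f (x₀ + t • v)) = fun t => fderiv ℝ f (x₀ + t • v) v :=
    funext fun t => ((hf.differentiable two_ne_zero _).hasFDerivAt.comp_hasDerivAt t
      (hline t)).deriv
  have hderiv2 : HasDerivAt (fun t : ℝ => fderiv ℝ f (x₀ + t • v) v)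
      (fderiv ℝ (fderiv ℝ f) x₀ v v) 0 := by
    have hd : DifferentiableAt ℝ (fderiv ℝ f) (x₀ + (0 : ℝ) • v) :=
      (hf.fderiv_right (m := 1) (by norm_num)).differentiable one_ne_zero _
    have := (ContinuousLinearMap.apply ℝ ℝ v).hasFDerivAt.comp_hasDerivAt 0
      (hd.hasFDerivAt.comp_hasDerivAt 0 (hline 0))
    simp only [zero_smul, add_zero] at this
    exact this
  have hmax : IsLocalMax (fun t : ℝ => f (x₀ + t • v)) 0 :=
    IsLocalMax.comp_continuous (g := fun t : ℝ => x₀ + t • v) (by simpa using h) (by fun_prop)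
  have := deriv_deriv_nonpos_of_isLocalMax hmax (hf.continuous.continuousAt.comp (by fun_prop))
  rwa [hderiv, hderiv2.deriv] at this

lemma posSemidef_neg_hessian_of_isLocalMax (hf : ContDiff ℝ 2 f) {x₀ : Fin n → ℝ}
    (h : IsLocalMax f x₀) : (-hessian f x₀).PosSemidef :=
  .of_dotProduct_mulVec_nonneg (isHermitian_hessian hf x₀).neg fun v => by
    rw [star_trivial, neg_mulVec, dotProduct_neg, dotProduct_hessian_mulVec hf, neg_nonneg]
    exact fderiv_fderiv_apply_self_nonpos_of_isLocalMax hf h v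

end Hessian

section MaxPoint

variable {n : ℕ} {u φ : (Fin n → ℝ) → ℝ} {μ : ℝ} {x₀ : Fin n → ℝ}

lemma pd2_exp_const_mul (c : ℝ) (hφ : ContDiff ℝ 2 φ) (i j : Fin n) (x : Fin n → ℝ) :
    pd2 i j (fun x => Real.exp (c * φ x)) x
      = c * Real.exp (c * φ x) * (pd2 i j φ x + c * pd i φ x * pd j φ x) := by
  have hφ' := hφ.differentiable two_ne_zero
  have hE : Differentiable ℝ fun x => Real.exp (c * φ x) := (hφ'.const_mul c).exp
  rw [pd2, pd_exp_const_mul c hφ', pd_mul (hE.const_mul c) (differentiable_pd hφ j),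
    pd_const_mul c hE, pd_exp_const_mul c hφ']
  simp only [pd2]
  ring

lemma pd_mul_exp (hu : Differentiable ℝ u) (hφ : Differentiable ℝ φ) (i : Fin n) :
    pd i (fun x => u x * Real.exp (-μ * φ x))
      = fun x => (pd i u x - μ * u x * pd i φ x) * Real.exp (-μ * φ x) := by
  rw [pd_mul hu ((hφ.const_mul _).exp), pd_exp_const_mul _ hφ]
  ext x
  ring

lemma pd_eq_of_isLocalMax_mul_exp (hu : Differentiable ℝ u) (hφ : Differentiable ℝ φ)
    (h : IsLocalMax (fun x => u x * Real.exp (-μ * φ x)) x₀) (i : Fin n) :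
    pd i u x₀ = μ * u x₀ * pd i φ x₀ := by
  have hcrit : pd i (fun x => u x * Real.exp (-μ * φ x)) x₀ = 0 := by
    rw [pd, h.fderiv_eq_zero]
    rfl
  rw [pd_mul_exp hu hφ, mul_eq_zero] at hcrit
  exact sub_eq_zero.mp (hcrit.resolve_right (Real.exp_pos _).ne')

lemma hessian_mul_exp_of_isLocalMax (hu : ContDiff ℝ 2 u) (hφ : ContDiff ℝ 2 φ)
    (h : IsLocalMax (fun x => u x * Real.exp (-μ * φ x)) x₀) :
    hessian (fun x => u x * Real.exp (-μ * φ x)) x₀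
      = Real.exp (-μ * φ x₀) • (hessian u x₀
          - (μ ^ 2 * u x₀) • vecMulVec (fun i => pd i φ x₀) (fun i => pd i φ x₀)
          - (μ * u x₀) • hessian φ x₀) := by
  have hE : ContDiff ℝ 2 fun x => Real.exp (-μ * φ x) := (contDiff_const.mul hφ).exp
  have hcrit := pd_eq_of_isLocalMax_mul_exp (hu.differentiable two_ne_zero)
    (hφ.differentiable two_ne_zero) h
  ext i j
  simp only [hessian, of_apply, Matrix.smul_apply, Matrix.sub_apply, vecMulVec_apply,
    smul_eq_mul]
  rw [pd2_mul hu hE, pd2_exp_const_mul _ hφ, pd_exp_const_mul _ (hφ.differentiable two_ne_zero),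
    pd_exp_const_mul _ (hφ.differentiable two_ne_zero), hcrit i, hcrit j]
  ring

lemma posSemidef_of_isLocalMax_mul_exp (hu : ContDiff ℝ 2 u) (hφ : ContDiff ℝ 2 φ)
    (h : IsLocalMax (fun x => u x * Real.exp (-μ * φ x)) x₀) :
    (-(hessian u x₀ - (μ ^ 2 * u x₀) • vecMulVec (fun i => pd i φ x₀) (fun i => pd i φ x₀)
        - (μ * u x₀) • hessian φ x₀)).PosSemidef := by
  have hneg := posSemidef_neg_hessian_of_isLocalMax
    (hu.mul (contDiff_const.mul hφ).exp) h
  rw [hessian_mul_exp_of_isLocalMax hu hφ h, ← smul_neg] at hneg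
  simpa [smul_smul, ← Real.exp_add] using hneg.smul (Real.exp_pos (μ * φ x₀)).le

end MaxPoint

lemma Matrix.PosSemidef.map_nonneg {m : Type*} [Fintype m] {P : Matrix m m ℝ} (hP : P.PosSemidef)
    (ℓ : Matrix m m ℝ →ₗ[ℝ] ℝ) (hℓ : ∀ ξ, 0 ≤ ℓ (vecMulVec ξ ξ)) : 0 ≤ ℓ P := by
  obtain ⟨k, w, rfl⟩ := Matrix.posSemidef_iff_eq_sum_vecMulVec.mp hP
  rw [map_sum]
  exact sum_nonneg fun i _ => by simpa using hℓ (w i)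

section Dagger

/-- The derivative of `AB − a₁² − a₂² − a₃² − a₄²` at `φ` in the direction `ψ` is this form,
with the coefficients of `φ`, applied to the Hessian of `ψ`. -/
noncomputable def daggerLinearization (A B a₁ a₂ a₃ a₄ : ℝ) :
    Matrix (Fin 6) (Fin 6) ℝ →ₗ[ℝ] ℝ where
  toFun M := B * (M 0 0 + M 1 1 + M 2 2 + M 3 3) + A * (M 4 4 + M 5 5)
    - 2 * a₁ * (M 2 4 - M 1 5) - 2 * a₂ * (M 3 4 - M 0 5)
    - 2 * a₃ * (M 3 5 + M 0 4) - 2 * a₄ * (M 2 5 + M 1 4)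
  map_add' M N := by simp only [Matrix.add_apply]; ring
  map_smul' c M := by simp only [Matrix.smul_apply, smul_eq_mul, RingHom.id_apply]; ring

variable {A B a₁ a₂ a₃ a₄ : ℝ}

lemma daggerLinearization_vecMulVec (ξ : Fin 6 → ℝ) :
    daggerLinearization A B a₁ a₂ a₃ a₄ (vecMulVec ξ ξ)
      = B * ((ξ 0) ^ 2 + (ξ 1) ^ 2 + (ξ 2) ^ 2 + (ξ 3) ^ 2) + A * ((ξ 4) ^ 2 + (ξ 5) ^ 2)
          - 2 * a₁ * (ξ 2 * ξ 4 - ξ 1 * ξ 5) - 2 * a₂ * (ξ 3 * ξ 4 - ξ 0 * ξ 5)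
          - 2 * a₃ * (ξ 3 * ξ 5 + ξ 0 * ξ 4) - 2 * a₄ * (ξ 2 * ξ 5 + ξ 1 * ξ 4) := by
  simp only [daggerLinearization, LinearMap.coe_mk, AddHom.coe_mk, vecMulVec_apply]
  ring

lemma daggerLinearization_hessian (ψ : (Fin 6 → ℝ) → ℝ) (x : Fin 6 → ℝ) :
    daggerLinearization A B a₁ a₂ a₃ a₄ (hessian ψ x)
      = B * (A6 ψ x - 1) + A * (B6 ψ x - 1)
          - 2 * (a₁ * a₁6 ψ x + a₂ * a₂6 ψ x + a₃ * a₃6 ψ x + a₄ * a₄6 ψ x) := by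
  simp only [daggerLinearization, LinearMap.coe_mk, AddHom.coe_mk, hessian, of_apply, A6, B6,
    a₁6, a₂6, a₃6, a₄6]
  ring

lemma nonneg_of_abs_cross_terms_le
    (h : ∀ ξ : Fin 6 → ℝ,
      2 * |a₁| * (ξ 2 * ξ 4 + ξ 1 * ξ 5) + 2 * |a₂| * (ξ 3 * ξ 4 + ξ 0 * ξ 5)
          + 2 * |a₃| * (ξ 3 * ξ 5 + ξ 0 * ξ 4) + 2 * |a₄| * (ξ 2 * ξ 5 + ξ 1 * ξ 4)
        ≤ B * ((ξ 0) ^ 2 + (ξ 1) ^ 2 + (ξ 2) ^ 2 + (ξ 3) ^ 2) + A * ((ξ 4) ^ 2 + (ξ 5) ^ 2)) :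
    0 ≤ A ∧ 0 ≤ B :=
  ⟨by simpa using h (Pi.single 4 1), by simpa using h (Pi.single 0 1)⟩

lemma daggerLinearization_vecMulVec_le
    (h : ∀ ξ : Fin 6 → ℝ,
      2 * |a₁| * (ξ 2 * ξ 4 + ξ 1 * ξ 5) + 2 * |a₂| * (ξ 3 * ξ 4 + ξ 0 * ξ 5)
          + 2 * |a₃| * (ξ 3 * ξ 5 + ξ 0 * ξ 4) + 2 * |a₄| * (ξ 2 * ξ 5 + ξ 1 * ξ 4)
        ≤ B * ((ξ 0) ^ 2 + (ξ 1) ^ 2 + (ξ 2) ^ 2 + (ξ 3) ^ 2) + A * ((ξ 4) ^ 2 + (ξ 5) ^ 2))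
    (ξ : Fin 6 → ℝ) :
    daggerLinearization A B a₁ a₂ a₃ a₄ (vecMulVec ξ ξ) ≤ 2 * (A + B) * ∑ i, ξ i ^ 2 := by
  obtain ⟨hA, hB⟩ := nonneg_of_abs_cross_terms_le h
  have habs := h fun i => |ξ i|
  simp only [sq_abs] at habs
  have hle : ∀ a b c : ℝ, a * (b * c) ≤ |a| * (|b| * |c|) ∧ -(a * (b * c)) ≤ |a| * (|b| * |c|) :=
    fun a b c => by
      rw [← abs_mul, ← abs_mul]
      exact ⟨le_abs_self _, neg_le_abs _⟩
  have hA' : 0 ≤ A * ((ξ 0) ^ 2 + (ξ 1) ^ 2 + (ξ 2) ^ 2 + (ξ 3) ^ 2) :=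
    mul_nonneg hA (by positivity)
  have hB' : 0 ≤ B * ((ξ 4) ^ 2 + (ξ 5) ^ 2) := mul_nonneg hB (by positivity)
  rw [daggerLinearization_vecMulVec, Fin.sum_univ_six]
  linarith [(hle a₁ (ξ 1) (ξ 5)).1, (hle a₁ (ξ 2) (ξ 4)).2, (hle a₂ (ξ 0) (ξ 5)).1,
    (hle a₂ (ξ 3) (ξ 4)).2, (hle a₃ (ξ 3) (ξ 5)).2, (hle a₃ (ξ 0) (ξ 4)).2,
    (hle a₄ (ξ 2) (ξ 5)).2, (hle a₄ (ξ 1) (ξ 4)).2]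

end Dagger

section EquationOnT6

variable {F φ : (Fin 6 → ℝ) → ℝ}

noncomputable abbrev linearizedDagger (φ : (Fin 6 → ℝ) → ℝ) (x : Fin 6 → ℝ) :
    Matrix (Fin 6) (Fin 6) ℝ →ₗ[ℝ] ℝ :=
  daggerLinearization (A6 φ x) (B6 φ x) (a₁6 φ x) (a₂6 φ x) (a₃6 φ x) (a₄6 φ x)

lemma lap_add_two_eq_A6_add_B6 (x : Fin 6 → ℝ) : lap φ x + 2 = A6 φ x + B6 φ x := by
  simp only [lap, A6, B6, Fin.sum_univ_six]
  ring

lemma contDiff_A6 (hφ : ContDiff ℝ 4 φ) : ContDiff ℝ 2 (A6 φ) := by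
  have := fun i j => contDiff_pd2 (m := 2) hφ (by norm_num) i j
  unfold A6
  fun_prop

lemma contDiff_B6 (hφ : ContDiff ℝ 4 φ) : ContDiff ℝ 2 (B6 φ) := by
  have := fun i j => contDiff_pd2 (m := 2) hφ (by norm_num) i j
  unfold B6
  fun_prop

lemma lap_A6 (hφ : ContDiff ℝ 4 φ) : lap (A6 φ) = fun x => A6 (lap φ) x - 1 := by
  have h := fun i j => contDiff_pd2 (m := 2) hφ (by norm_num) i j
  unfold A6
  rw [lap_add_const, lap_add (by fun_prop) (h 3 3), lap_add (by fun_prop) (h 2 2),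
    lap_add (h 0 0) (h 1 1), lap_pd2 hφ, lap_pd2 hφ, lap_pd2 hφ, lap_pd2 hφ]
  ext x
  ring

lemma lap_B6 (hφ : ContDiff ℝ 4 φ) : lap (B6 φ) = fun x => B6 (lap φ) x - 1 := by
  have h := fun i j => contDiff_pd2 (m := 2) hφ (by norm_num) i j
  unfold B6
  rw [lap_add_const, lap_add (h 4 4) (h 5 5), lap_pd2 hφ, lap_pd2 hφ]
  ext x
  ring

lemma lap_sub_pd2 (hφ : ContDiff ℝ 4 φ) (i j k l : Fin 6) :
    lap (fun x => pd2 i j φ x - pd2 k l φ x)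
      = fun x => pd2 i j (lap φ) x - pd2 k l (lap φ) x := by
  rw [lap_sub (contDiff_pd2 hφ (by norm_num) i j) (contDiff_pd2 hφ (by norm_num) k l),
    lap_pd2 hφ, lap_pd2 hφ]

lemma lap_add_pd2 (hφ : ContDiff ℝ 4 φ) (i j k l : Fin 6) :
    lap (fun x => pd2 i j φ x + pd2 k l φ x)
      = fun x => pd2 i j (lap φ) x + pd2 k l (lap φ) x := by
  rw [lap_add (contDiff_pd2 hφ (by norm_num) i j) (contDiff_pd2 hφ (by norm_num) k l),
    lap_pd2 hφ, lap_pd2 hφ]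

lemma lap_exp_eq_of_eqDagger (hφ : ContDiff ℝ 4 φ) (heq : EqDagger F φ) (x : Fin 6 → ℝ) :
    lap (fun x => Real.exp (F x)) x
      = linearizedDagger φ x (hessian (lap φ) x)
        + 2 * ∑ i, pd i (A6 φ) x * pd i (B6 φ) x
        - 2 * ∑ i, (pd i (a₁6 φ) x ^ 2 + pd i (a₂6 φ) x ^ 2 + pd i (a₃6 φ) x ^ 2
            + pd i (a₄6 φ) x ^ 2) := by
  have h := fun i j => contDiff_pd2 (m := 2) hφ (by norm_num) i j
  have hA := contDiff_A6 hφ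
  have hB := contDiff_B6 hφ
  have h₁ : ContDiff ℝ 2 (a₁6 φ) := (h 2 4).sub (h 1 5)
  have h₂ : ContDiff ℝ 2 (a₂6 φ) := (h 3 4).sub (h 0 5)
  have h₃ : ContDiff ℝ 2 (a₃6 φ) := (h 3 5).add (h 0 4)
  have h₄ : ContDiff ℝ 2 (a₄6 φ) := (h 2 5).add (h 1 4)
  rw [show (fun x => Real.exp (F x)) = fun x => A6 φ x * B6 φ x - a₁6 φ x ^ 2 - a₂6 φ x ^ 2
      - a₃6 φ x ^ 2 - a₄6 φ x ^ 2 from funext fun x => (heq x).symm,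
    lap_sub (by fun_prop) (by fun_prop), lap_sub (by fun_prop) (by fun_prop),
    lap_sub (by fun_prop) (by fun_prop), lap_sub (by fun_prop) (by fun_prop)]
  have hl₁ : lap (a₁6 φ) = a₁6 (lap φ) := lap_sub_pd2 hφ 2 4 1 5
  have hl₂ : lap (a₂6 φ) = a₂6 (lap φ) := lap_sub_pd2 hφ 3 4 0 5
  have hl₃ : lap (a₃6 φ) = a₃6 (lap φ) := lap_add_pd2 hφ 3 5 0 4
  have hl₄ : lap (a₄6 φ) = a₄6 (lap φ) := lap_add_pd2 hφ 2 5 1 4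
  simp only [lap_mul hA hB, lap_pow_two h₁, lap_pow_two h₂, lap_pow_two h₃, lap_pow_two h₄,
    lap_A6 hφ, lap_B6 hφ, hl₁, hl₂, hl₃, hl₄, daggerLinearization_hessian, sum_add_distrib]
  ring

lemma daggerLinearization_hessian_self (heq : EqDagger F φ) (x : Fin 6 → ℝ) :
    linearizedDagger φ x (hessian φ x) = 2 * Real.exp (F x) - (lap φ x + 2) := by
  rw [daggerLinearization_hessian, ← heq x, lap_add_two_eq_A6_add_B6]
  ring

lemma pd_A6_add_pd_B6 (hφ : ContDiff ℝ 4 φ) (i : Fin 6) (x : Fin 6 → ℝ) :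
    pd i (A6 φ) x + pd i (B6 φ) x = pd i (fun x => lap φ x + 2) x := by
  rw [funext fun x => lap_add_two_eq_A6_add_B6 (φ := φ) x,
    pd_add ((contDiff_A6 hφ).differentiable two_ne_zero)
      ((contDiff_B6 hφ).differentiable two_ne_zero)]

end EquationOnT6

section KeyEstimate

variable {F φ : (Fin 6 → ℝ) → ℝ} {μ : ℝ} {p₀ : Fin 6 → ℝ}

lemma linearizedDagger_hessian_lap_le (hφ : ContDiff ℝ 4 φ) (heq : EqDagger F φ)
    (hloc : IsLocalMax (fun x => (lap φ x + 2) * Real.exp (-μ * φ x)) p₀)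
    (hell : ∀ ξ, 0 ≤ linearizedDagger φ p₀ (vecMulVec ξ ξ)) :
    linearizedDagger φ p₀ (hessian (lap φ) p₀)
      ≤ μ ^ 2 * (lap φ p₀ + 2)
          * linearizedDagger φ p₀ (vecMulVec (fun i => pd i φ p₀) (fun i => pd i φ p₀))
        + μ * (lap φ p₀ + 2) * (2 * Real.exp (F p₀) - (lap φ p₀ + 2)) := by
  have h := (posSemidef_of_isLocalMax_mul_exp ((contDiff_lap hφ (by norm_num)).add contDiff_const)
    (hφ.of_le (by norm_num)) hloc).map_nonneg _ hell
  rw [map_neg, map_sub, map_sub, map_smul, map_smul, hessian_add_const,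
    daggerLinearization_hessian_self heq, smul_eq_mul, smul_eq_mul] at h
  linarith

lemma four_mul_sum_pd_A6_mul_pd_B6_le (hφ : ContDiff ℝ 4 φ)
    (hloc : IsLocalMax (fun x => (lap φ x + 2) * Real.exp (-μ * φ x)) p₀) :
    4 * ∑ i, pd i (A6 φ) p₀ * pd i (B6 φ) p₀
      ≤ μ ^ 2 * (lap φ p₀ + 2) ^ 2 * ∑ i, pd i φ p₀ ^ 2 := by
  rw [mul_sum, mul_sum]
  refine sum_le_sum fun i _ => ?_
  have h := four_mul_le_sq_add (pd i (A6 φ) p₀) (pd i (B6 φ) p₀)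
  rw [pd_A6_add_pd_B6 hφ, pd_eq_of_isLocalMax_mul_exp
    (((contDiff_lap hφ (by norm_num)).add contDiff_const).differentiable two_ne_zero)
    ((hφ.of_le (by norm_num)).differentiable two_ne_zero) hloc] at h
  linarith

end KeyEstimate

theorem key_estimate_at_max_point_T6_general
    (F φ : (Fin 6 → ℝ) → ℝ)
    (hφ : ContDiff ℝ 4 φ) (heq : EqDagger F φ)
    (μ : ℝ)
    (p₀ : Fin 6 → ℝ)
    (hmax : ∀ x : Fin 6 → ℝ,
      (lap φ x + 2) * Real.exp (-μ * φ x) ≤ (lap φ p₀ + 2) * Real.exp (-μ * φ p₀))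
    (hi : ∀ ξ : Fin 6 → ℝ,
      0 ≤ B6 φ p₀ * ((ξ 0) ^ 2 + (ξ 1) ^ 2 + (ξ 2) ^ 2 + (ξ 3) ^ 2)
          + A6 φ p₀ * ((ξ 4) ^ 2 + (ξ 5) ^ 2)
          - 2 * a₁6 φ p₀ * (ξ 2 * ξ 4 - ξ 1 * ξ 5)
          - 2 * a₂6 φ p₀ * (ξ 3 * ξ 4 - ξ 0 * ξ 5)
          - 2 * a₃6 φ p₀ * (ξ 3 * ξ 5 + ξ 0 * ξ 4)
          - 2 * a₄6 φ p₀ * (ξ 2 * ξ 5 + ξ 1 * ξ 4))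
    (hii : ∀ ξ : Fin 6 → ℝ,
      2 * |a₁6 φ p₀| * (ξ 2 * ξ 4 + ξ 1 * ξ 5)
          + 2 * |a₂6 φ p₀| * (ξ 3 * ξ 4 + ξ 0 * ξ 5)
          + 2 * |a₃6 φ p₀| * (ξ 3 * ξ 5 + ξ 0 * ξ 4)
          + 2 * |a₄6 φ p₀| * (ξ 2 * ξ 5 + ξ 1 * ξ 4)
        ≤ B6 φ p₀ * ((ξ 0) ^ 2 + (ξ 1) ^ 2 + (ξ 2) ^ 2 + (ξ 3) ^ 2)
          + A6 φ p₀ * ((ξ 4) ^ 2 + (ξ 5) ^ 2)) :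
    μ * (lap φ p₀ + 2) ^ 2
      ≤ -(lap (fun x => Real.exp (F x)) p₀)
        + 2 * μ * (lap φ p₀ + 2) * Real.exp (F p₀)
        + 3 * μ ^ 2 * (lap φ p₀ + 2) ^ 2 * (∑ i, (pd i φ p₀) ^ 2) := by
  have hloc : IsLocalMax (fun x => (lap φ x + 2) * Real.exp (-μ * φ x)) p₀ := .of_forall hmax
  have hmaxPrinciple := linearizedDagger_hessian_lap_le hφ heq hloc
    fun ξ => (hi ξ).trans_eq (daggerLinearization_vecMulVec ξ).symm
  have hcross := four_mul_sum_pd_A6_mul_pd_B6_le hφ hloc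
  have hpde := lap_exp_eq_of_eqDagger hφ heq p₀
  have hu : lap φ p₀ + 2 = A6 φ p₀ + B6 φ p₀ := lap_add_two_eq_A6_add_B6 p₀
  obtain ⟨hA, hB⟩ := nonneg_of_abs_cross_terms_le hii
  have hgrad : linearizedDagger φ p₀ (vecMulVec (fun i => pd i φ p₀) (fun i => pd i φ p₀))
      ≤ 2 * (lap φ p₀ + 2) * ∑ i, pd i φ p₀ ^ 2 :=
    hu ▸ daggerLinearization_vecMulVec_le hii _
  have hu₀ : 0 ≤ lap φ p₀ + 2 := by linarith
  have hgradμ := mul_le_mul_of_nonneg_left hgrad (mul_nonneg (sq_nonneg μ) hu₀)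
  have hsq : 0 ≤ ∑ i, (pd i (a₁6 φ) p₀ ^ 2 + pd i (a₂6 φ) p₀ ^ 2 + pd i (a₃6 φ) p₀ ^ 2
      + pd i (a₄6 φ) p₀ ^ 2) := by positivity
  have hG : 0 ≤ μ ^ 2 * (lap φ p₀ + 2) ^ 2 * ∑ i, pd i φ p₀ ^ 2 := by positivity
  linarith

/-- Conditional key estimate at a maximum point of `(Δφ+2)e^{−μφ}` for solutions of
equation (†) on `T⁶`. -/
theorem key_estimate_at_max_point_T6
    (F φ : (Fin 6 → ℝ) → ℝ) (hF : ContDiff ℝ 2 F) (hFper : PeriodicPi F)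
    (hφ : ContDiff ℝ 4 φ) (hφper : PeriodicPi φ) (heq : EqDagger F φ)
    (hpos : ∀ x : Fin 6 → ℝ, 0 < lap φ x + 2)
    (μ : ℝ)
    (hμ : μ = 1 / ((⨆ x : Fin 6 → ℝ, (lap φ x + 2)) *
      (1 + ⨆ x : Fin 6 → ℝ, eucNorm (fun i => pd i φ x))))
    (p₀ : Fin 6 → ℝ)
    (hmax : ∀ x : Fin 6 → ℝ,
      (lap φ x + 2) * Real.exp (-μ * φ x) ≤ (lap φ p₀ + 2) * Real.exp (-μ * φ p₀))
    (hi : ∀ ξ : Fin 6 → ℝ,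
      0 ≤ B6 φ p₀ * ((ξ 0) ^ 2 + (ξ 1) ^ 2 + (ξ 2) ^ 2 + (ξ 3) ^ 2)
          + A6 φ p₀ * ((ξ 4) ^ 2 + (ξ 5) ^ 2)
          - 2 * a₁6 φ p₀ * (ξ 2 * ξ 4 - ξ 1 * ξ 5)
          - 2 * a₂6 φ p₀ * (ξ 3 * ξ 4 - ξ 0 * ξ 5)
          - 2 * a₃6 φ p₀ * (ξ 3 * ξ 5 + ξ 0 * ξ 4)
          - 2 * a₄6 φ p₀ * (ξ 2 * ξ 5 + ξ 1 * ξ 4))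
    (hii : ∀ ξ : Fin 6 → ℝ,
      2 * |a₁6 φ p₀| * (ξ 2 * ξ 4 + ξ 1 * ξ 5)
          + 2 * |a₂6 φ p₀| * (ξ 3 * ξ 4 + ξ 0 * ξ 5)
          + 2 * |a₃6 φ p₀| * (ξ 3 * ξ 5 + ξ 0 * ξ 4)
          + 2 * |a₄6 φ p₀| * (ξ 2 * ξ 5 + ξ 1 * ξ 4)
        ≤ B6 φ p₀ * ((ξ 0) ^ 2 + (ξ 1) ^ 2 + (ξ 2) ^ 2 + (ξ 3) ^ 2)
          + A6 φ p₀ * ((ξ 4) ^ 2 + (ξ 5) ^ 2)) :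
    μ * (lap φ p₀ + 2) ^ 2
      ≤ -(lap (fun x => Real.exp (F x)) p₀)
        + 2 * μ * (lap φ p₀ + 2) * Real.exp (F p₀)
        + 3 * μ ^ 2 * (lap φ p₀ + 2) ^ 2 * (∑ i, (pd i φ p₀) ^ 2) :=
  key_estimate_at_max_point_T6_general F φ hφ heq μ p₀ hmax hi hii
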